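/- Let G be a connected non-bipartite graph and let c_1 − c_2 − ... − c_{2q+1} − c_1 be an odd closed walk spanning V (so that E({c_1,...,c_{2q+1}}) = V). Then the word z obtained by concatenating the cycle word c_1 c_2 ... c_{2q+1} four times is a strong erasing word for (G, LCFM): every even-length right sub-word of z is completely matchable, and Q_LCFM(i j z) = ∅ for every pair of non-adjacent vertices i, j. -/

import Mathlib

variable {V : Type*} [Fintype V] [DecidableEq V]

/-- One step of Last Come, First Matched. -/
def lcfmStep (G : SimpleGraph V) [DecidableRel G.Adj] (w : List V) (v : V) : List V :=
  match w.reverse.findIdx? (fun u => decide (G.Adj u v)) with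
  | some k => (w.reverse.eraseIdx k).reverse
  | none => w ++ [v]

/-- Buffer content after processing `z` under LCFM from an empty system. -/
def lcfmQ (G : SimpleGraph V) [DecidableRel G.Adj] (z : List V) : List V :=
  z.foldl (lcfmStep G) []

/-- The word of one period of the closed walk `c` of length `2q+1`. -/
def cycleWord (q : ℕ) (c : ℕ → V) : List V :=
  List.ofFn (fun t : Fin (2 * q + 1) => c t)

/-! An LCFM arrival compatible with the most recent buffered item erases it. Consecutive letters
of the walk are adjacent, so along the walk the buffer returns to its previous content every two
steps unless an older item gets matched: an even stretch of the walk clears the empty buffer, a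
buffer `[x]` is cleared once `x` meets a neighbour at an even offset, and a buffer `[i, j]` with
`i, j` non-adjacent shrinks to a singleton once `j` does. As the walk has odd period `p` and
meets a neighbour of every vertex in each period, every vertex has a neighbour at an even offset
within any `2p` consecutive steps, and four periods leave room for both waits. -/

section Walk

variable {α : Type*}

def walkWord (c : ℕ → α) (m n : ℕ) : List α := (List.range' m n).map c

variable {c : ℕ → α}

theorem walkWord_succ (m n : ℕ) : walkWord c m (n + 1) = c m :: walkWord c (m + 1) n := rfl

theorem walkWord_add (m n k : ℕ) :
    walkWord c m (n + k) = walkWord c m n ++ walkWord c (m + n) k := by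
  rw [walkWord, walkWord, walkWord, ← List.map_append, ← List.range'_append, Nat.one_mul]

theorem walkWord_drop (m n k : ℕ) : (walkWord c m n).drop k = walkWord c (m + k) (n - k) := by
  simp only [walkWord, ← List.map_drop, List.drop_range', Nat.mul_one]

theorem walkWord_add_period {p : ℕ} (hper : Function.Periodic c p) (m n : ℕ) :
    walkWord c (m + p) n = walkWord c m n := by
  rw [walkWord, walkWord, add_comm m, ← List.map_add_range', List.map_map]
  exact List.map_congr_left fun k _ => by simpa [add_comm] using hper k

theorem walkWord_period_add {p : ℕ} (hper : Function.Periodic c p) (m n : ℕ) :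
    walkWord c m (p + n) = walkWord c m p ++ walkWord c m n := by
  rw [walkWord_add, walkWord_add_period hper]

theorem cycleWord_eq_walkWord (q : ℕ) (c : ℕ → α) :
    cycleWord q c = walkWord c 0 (2 * q + 1) := by
  rw [cycleWord, walkWord, List.ofFn_eq_map, ← List.range_eq_range']
  exact List.ext_getElem (by simp) (by simp)

theorem exists_adj_walk_even_offset (G : SimpleGraph α) {p : ℕ} (hper : Function.Periodic c p)
    (hp : Odd p) (hspan : ∀ v, ∃ k < p, G.Adj (c k) v) (v : α) (m : ℕ) :
    ∃ s < p, G.Adj v (c (m + 2 * s)) := by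
  obtain ⟨k, hk, hkv⟩ := hspan v
  have hdiv := Nat.div_add_mod' m p
  have hmod := Nat.mod_lt m hp.pos
  -- the offset `k + p - m % p` reaches a copy of `c k`; shifting it by the odd `p` fixes parity
  obtain ⟨s, hs, N, hN⟩ : ∃ s < p, ∃ N, m + 2 * s = k + N * p := by
    rcases Nat.even_or_odd (k + p - m % p) with ⟨d, hd⟩ | ⟨d, hd⟩
    · exact ⟨d, by omega, m / p + 1, by rw [Nat.add_mul]; omega⟩
    · obtain ⟨r, rfl⟩ := hp
      by_cases hkm : m % (2 * r + 1) ≤ k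
      · exact ⟨d - r, by omega, m / (2 * r + 1), by omega⟩
      · exact ⟨d + r + 1, by omega, m / (2 * r + 1) + 2, by rw [Nat.add_mul]; omega⟩
  have hcN : c (k + N * p) = c k := hper.nat_mul N k
  exact ⟨s, hs, by rw [hN, hcN]; exact hkv.symm⟩

end Walk

section Lcfm

variable {α : Type*} (G : SimpleGraph α) [DecidableRel G.Adj]

def lcfmRun (b z : List α) : List α := z.foldl (lcfmStep G) b

theorem lcfmQ_eq_lcfmRun (z : List α) : lcfmQ G z = lcfmRun G [] z := rfl

theorem lcfmRun_cons (b : List α) (v : α) (z : List α) :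
    lcfmRun G b (v :: z) = lcfmRun G (lcfmStep G b v) z := rfl

theorem lcfmStep_nil (v : α) : lcfmStep G [] v = [v] := by
  simp [lcfmStep]

theorem lcfmStep_singleton_of_adj {u v : α} (h : G.Adj u v) : lcfmStep G [u] v = [] := by
  simp [lcfmStep, List.findIdx?, List.findIdx?.go, h]

theorem lcfmStep_singleton_of_not_adj {u v : α} (h : ¬ G.Adj u v) :
    lcfmStep G [u] v = [u, v] := by
  simp [lcfmStep, List.findIdx?, List.findIdx?.go, h]

theorem lcfmStep_pair_of_adj_right {a b v : α} (h : G.Adj b v) : lcfmStep G [a, b] v = [a] := by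
  simp [lcfmStep, List.findIdx?, List.findIdx?.go, h]

theorem lcfmStep_pair_of_adj_left {a b v : α} (hb : ¬ G.Adj b v) (ha : G.Adj a v) :
    lcfmStep G [a, b] v = [b] := by
  simp [lcfmStep, List.findIdx?, List.findIdx?.go, hb, ha]

theorem lcfmStep_pair_of_not_adj {a b v : α} (hb : ¬ G.Adj b v) (ha : ¬ G.Adj a v) :
    lcfmStep G [a, b] v = [a, b, v] := by
  simp [lcfmStep, List.findIdx?, List.findIdx?.go, hb, ha]

theorem lcfmStep_triple_of_adj {a b x v : α} (h : G.Adj x v) :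
    lcfmStep G [a, b, x] v = [a, b] := by
  simp [lcfmStep, List.findIdx?, List.findIdx?.go, h]

variable {G} {c : ℕ → α}

theorem lcfmRun_nil_walkWord_even (hadj : ∀ k, G.Adj (c k) (c (k + 1))) (m n : ℕ) :
    lcfmRun G [] (walkWord c m (2 * n)) = [] := by
  induction n generalizing m with
  | zero => rfl
  | succ n ih =>
    rw [show 2 * (n + 1) = 2 * n + 1 + 1 by ring, walkWord_succ, walkWord_succ, lcfmRun_cons,
      lcfmRun_cons, lcfmStep_nil, lcfmStep_singleton_of_adj G (hadj m)]
    exact ih (m + 2)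

theorem lcfmRun_singleton_walkWord (hadj : ∀ k, G.Adj (c k) (c (k + 1))) {x : α} {u : ℕ} :
    ∀ {m n : ℕ}, u ≤ n → G.Adj x (c (m + 2 * u)) →
      lcfmRun G [x] (walkWord c m (2 * n + 1)) = [] := by
  induction u with
  | zero =>
    intro m n _ hx
    rw [Nat.mul_zero, Nat.add_zero] at hx
    rw [walkWord_succ, lcfmRun_cons, lcfmStep_singleton_of_adj G hx]
    exact lcfmRun_nil_walkWord_even hadj (m + 1) n
  | succ u ih =>
    intro m n hun hx
    rw [walkWord_succ, lcfmRun_cons]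
    by_cases hxm : G.Adj x (c m)
    · rw [lcfmStep_singleton_of_adj G hxm]
      exact lcfmRun_nil_walkWord_even hadj (m + 1) n
    · obtain ⟨n, rfl⟩ : ∃ n', n = n' + 1 := ⟨n - 1, by omega⟩
      rw [lcfmStep_singleton_of_not_adj G hxm, show 2 * (n + 1) = 2 * n + 1 + 1 by ring,
        walkWord_succ, lcfmRun_cons, lcfmStep_pair_of_adj_right G (hadj m)]
      exact ih (by omega) (by rwa [show m + 2 + 2 * u = m + 2 * (u + 1) by ring])

theorem lcfmRun_singleton_walkWord_of_window (hadj : ∀ k, G.Adj (c k) (c (k + 1))) {r : ℕ}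
    (hwin : ∀ v m, ∃ s < r, G.Adj v (c (m + 2 * s))) (x : α) (m : ℕ) {n : ℕ} (hn : r ≤ n + 1) :
    lcfmRun G [x] (walkWord c m (2 * n + 1)) = [] := by
  obtain ⟨s, hs, hx⟩ := hwin x m
  exact lcfmRun_singleton_walkWord hadj (by omega) hx

theorem lcfmRun_pair_walkWord (hadj : ∀ k, G.Adj (c k) (c (k + 1))) {r : ℕ}
    (hwin : ∀ v m, ∃ s < r, G.Adj v (c (m + 2 * s))) {a b : α} {u : ℕ} :
    ∀ {m n : ℕ}, u + r < n → G.Adj b (c (m + 2 * u)) →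
      lcfmRun G [a, b] (walkWord c m (2 * n)) = [] := by
  induction u with
  | zero =>
    intro m n hn hb
    rw [Nat.mul_zero, Nat.add_zero] at hb
    obtain ⟨n, rfl⟩ : ∃ n', n = n' + 1 := ⟨n - 1, by omega⟩
    rw [show 2 * (n + 1) = 2 * n + 1 + 1 by ring, walkWord_succ, lcfmRun_cons,
      lcfmStep_pair_of_adj_right G hb]
    exact lcfmRun_singleton_walkWord_of_window hadj hwin a (m + 1) (by omega)
  | succ u ih =>
    intro m n hn hbu
    obtain ⟨n, rfl⟩ : ∃ n', n = n' + 1 := ⟨n - 1, by omega⟩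
    rw [show 2 * (n + 1) = 2 * n + 1 + 1 by ring, walkWord_succ, lcfmRun_cons]
    by_cases hb : G.Adj b (c m)
    · rw [lcfmStep_pair_of_adj_right G hb]
      exact lcfmRun_singleton_walkWord_of_window hadj hwin a (m + 1) (by omega)
    by_cases ha : G.Adj a (c m)
    · rw [lcfmStep_pair_of_adj_left G hb ha]
      exact lcfmRun_singleton_walkWord_of_window hadj hwin b (m + 1) (by omega)
    rw [lcfmStep_pair_of_not_adj G hb ha, walkWord_succ, lcfmRun_cons,
      lcfmStep_triple_of_adj G (hadj m)]
    exact ih (by omega) (by rwa [show m + 2 + 2 * u = m + 2 * (u + 1) by ring])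

end Lcfm

theorem lcfm_strong_erasing_word_general (G : SimpleGraph V) [DecidableRel G.Adj]
    (q : ℕ) (c : ℕ → V)
    (hadj : ∀ k : ℕ, G.Adj (c k) (c (k + 1)))
    (hper : ∀ k : ℕ, c (k + (2 * q + 1)) = c k)
    (hspan : ∀ v : V, ∃ k < 2 * q + 1, G.Adj (c k) v) :
    (∀ k : ℕ, Even k →
        lcfmQ G (((cycleWord q c ++ cycleWord q c ++ cycleWord q c ++ cycleWord q c)).drop k)
          = []) ∧
      ∀ i j : V, ¬ G.Adj i j →
        lcfmQ G (i :: j ::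
          (cycleWord q c ++ cycleWord q c ++ cycleWord q c ++ cycleWord q c)) = [] := by
  have hwin := exists_adj_walk_even_offset G hper (odd_two_mul_add_one q) hspan
  have hz : cycleWord q c ++ cycleWord q c ++ cycleWord q c ++ cycleWord q c
      = walkWord c 0 (2 * (2 * (2 * q + 1))) := by
    rw [show 2 * (2 * (2 * q + 1)) = (2 * q + 1) + ((2 * q + 1) + ((2 * q + 1) + (2 * q + 1)))
      by ring]
    simp only [walkWord_period_add (p := 2 * q + 1) hper, cycleWord_eq_walkWord,
      List.append_assoc]
  refine ⟨fun k hk => ?_, fun i j hij => ?_⟩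
  · obtain ⟨a, rfl⟩ := hk
    rw [hz, walkWord_drop, show 2 * (2 * (2 * q + 1)) - (a + a) = 2 * (2 * (2 * q + 1) - a)
      by omega]
    exact lcfmRun_nil_walkWord_even hadj _ _
  · obtain ⟨u, hu, hju⟩ := hwin j 0
    rw [hz, lcfmQ_eq_lcfmRun, lcfmRun_cons, lcfmStep_nil, lcfmRun_cons,
      lcfmStep_singleton_of_not_adj G hij]
    exact lcfmRun_pair_walkWord hadj hwin (by omega) hju

/-- If `c_0 − c_1 − ⋯ − c_{2q}` is an odd closed walk of a connected non-bipartite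
graph spanning `V` in the sense that every vertex is adjacent to some `c_k`, then the
fourfold repetition `z` of the cycle word is a strong erasing word for `(G, LCFM)`:
every even-length right sub-word of `z` is completely matchable, and
`Q_LCFM(i j z) = ∅` for every pair of non-adjacent vertices `i, j`. -/
theorem lcfm_strong_erasing_word (G : SimpleGraph V) [DecidableRel G.Adj]
    (hconn : G.Connected) (hnb : ¬ G.Colorable 2)
    (q : ℕ) (c : ℕ → V)
    (hadj : ∀ k : ℕ, G.Adj (c k) (c (k + 1)))
    (hper : ∀ k : ℕ, c (k + (2 * q + 1)) = c k)
    (hspan : ∀ v : V, ∃ k < 2 * q + 1, G.Adj (c k) v) :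
    (∀ k : ℕ, Even k →
        lcfmQ G (((cycleWord q c ++ cycleWord q c ++ cycleWord q c ++ cycleWord q c)).drop k)
          = []) ∧
      ∀ i j : V, ¬ G.Adj i j →
        lcfmQ G (i :: j ::
          (cycleWord q c ++ cycleWord q c ++ cycleWord q c ++ cycleWord q c)) = [] :=
  lcfm_strong_erasing_word_general G q c hadj hper hspan
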